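/- arXiv:cs/0406006 — 3 statements merged into one kernel-verified Lean document; each statement's English description precedes it below -/
import Mathlib

section
/- Let S be any Boolean predicate of variables x_1,…,x_n and two additional Boolean arguments f,t, let Q_1,…,Q_n ∈ {∃,∀}, and let 0 ≤ k ≤ n. Then the quantified statement Q_1x_1 ⋯ Q_nx_n S(x_1,…,x_n,0,1) is true if and only if Q_1x_1 ⋯ Q_kx_k ∃f ∃t ∀y Q_{k+1}x_{k+1} ⋯ Q_nx_n [S(x_1,…,x_n,f,t) ∧ (¬f ∨ y) ∧ (¬y ∨ t)] is true. In other words, the quantifier block ∃f ∃t ∀y together with the clauses f̄ ∨ y and ȳ ∨ t may be inserted anywhere in the quantifier string to simulate the constants 0 and 1 by the variables f and t. -/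
/-- Truth of the quantified Boolean statement `Q₁x₁ ⋯ Qₙxₙ P(x₁,…,xₙ)`, where the
quantifiers are given as a list (`true` denotes `∀`, `false` denotes `∃`) and the
predicate `P` receives the list of values assigned to the quantified variables. -/
def QTrue : List Bool → (List Bool → Prop) → Prop
  | [], P => P []
  | q :: qs, P =>
      cond q
        (∀ b : Bool, QTrue qs (fun l => P (b :: l)))
        (∃ b : Bool, QTrue qs (fun l => P (b :: l)))

theorem QTrue_and_const {qs : List Bool} {P : List Bool → Prop} {C : Prop} :
    QTrue qs (fun l => P l ∧ C) ↔ QTrue qs P ∧ C := by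
  induction qs generalizing P with
  | nil => exact Iff.rfl
  | cons q qs ih =>
    cases q <;> simp only [QTrue, cond]
    · constructor
      · rintro ⟨b, hb⟩
        rw [ih] at hb
        exact ⟨⟨b, hb.1⟩, hb.2⟩
      · rintro ⟨⟨b, hb⟩, hc⟩
        exact ⟨b, ih.mpr ⟨hb, hc⟩⟩
    · constructor
      · intro h
        exact ⟨fun b => (ih.mp (h b)).1, (ih.mp (h true)).2⟩
      · rintro ⟨h, hc⟩ b
        exact ih.mpr ⟨h b, hc⟩

/-- The quantifier block `∃f ∃t ∀y` together with the clauses `f̄ ∨ y` and `ȳ ∨ t`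
may be inserted anywhere in the quantifier string (here: between the prefix `qs₁`,
i.e. `Q₁x₁ ⋯ Q_kx_k`, and the suffix `qs₂`, i.e. `Q_{k+1}x_{k+1} ⋯ Qₙxₙ`)
to simulate the constants 0 and 1 by the variables `f` and `t`. -/
theorem insert_exists_ft_forall_y (qs₁ qs₂ : List Bool)
    (S : List Bool → Bool → Bool → Prop) :
    QTrue (qs₁ ++ qs₂) (fun xs => S xs false true) ↔
      QTrue qs₁ (fun x1 => ∃ f t : Bool, ∀ y : Bool,
        QTrue qs₂ (fun x2 =>
          S (x1 ++ x2) f t ∧ (!f || y) = true ∧ (!y || t) = true)) := by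
  induction qs₁ generalizing S with
  | nil =>
    simp only [List.nil_append, QTrue]
    constructor
    · intro h
      refine ⟨false, true, fun y => ?_⟩
      have hc : (!false || y) = true ∧ (!y || true) = true := by cases y <;> simp
      exact QTrue_and_const.mpr ⟨h, hc⟩
    · rintro ⟨f, t, h⟩
      have h0 := QTrue_and_const.mp (h false)
      have h1 := QTrue_and_const.mp (h true)
      have hf : f = false := by have := h0.2.1; cases f <;> simp_all
      have ht : t = true := by have := h1.2.2; cases t <;> simp_all
      subst hf ht
      exact h1.1
  | cons q qs ih =>
    cases q <;> simp only [List.cons_append, QTrue, cond]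
    · exact exists_congr fun b => ih (fun xs f t => S (b :: xs) f t)
    · exact forall_congr' fun b => ih (fun xs f t => S (b :: xs) f t)
end

section
/- Let i ≥ 2, let X_1,…,X_i be disjoint blocks of Boolean variables, let Q_1,…,Q_{i-2} be quantifiers with Q_{i-1} = ∀ and Q_i = ∃ (so the prefix ends in ∀X_{i-1} ∃X_i), and let S be any Boolean predicate of the assignments to X_1,…,X_i and two additional Boolean arguments f,t. Then Q_1X_1 ⋯ ∀X_{i-1} ∃X_i S(X_1,…,X_i,0,1) is true if and only if Q_1X_1 ⋯ ∀X_{i-1} ∀y ∀z ∃f ∃t ∃X_i [S(X_1,…,X_i,f,t) ∧ (¬f ∨ y) ∧ (¬z ∨ t)] is true. -/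

theorem QTrue_congr {qs : List Bool} {P Q : List Bool → Prop}
    (h : ∀ l, P l ↔ Q l) : QTrue qs P ↔ QTrue qs Q := by
  induction qs generalizing P Q with
  | nil => exact h []
  | cons q qs ih =>
    cases q with
    | true => exact forall_congr' fun b => ih fun l => h (b :: l)
    | false => exact exists_congr fun b => ih fun l => h (b :: l)

/-- For a quantifier prefix `Q₁X₁ ⋯ Q_{i-2}X_{i-2}` (represented by the quantifier
string `qs`) ending in `∀X_{i-1} ∃X_i` (blocks of sizes `m` and `p`):
`Q₁X₁ ⋯ ∀X_{i-1} ∃X_i S(X₁,…,X_i,0,1)` is true iff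
`Q₁X₁ ⋯ ∀X_{i-1} ∀y ∀z ∃f ∃t ∃X_i [S(X₁,…,X_i,f,t) ∧ (f̄ ∨ y) ∧ (z̄ ∨ t)]` is true. -/
theorem constants_elimination_forall_exists_suffix (qs : List Bool) (m p : ℕ)
    (S : List Bool → (Fin m → Bool) → (Fin p → Bool) → Bool → Bool → Prop) :
    QTrue qs (fun w => ∀ X₁ : Fin m → Bool, ∃ X₂ : Fin p → Bool,
        S w X₁ X₂ false true) ↔
      QTrue qs (fun w => ∀ X₁ : Fin m → Bool, ∀ y z : Bool, ∃ f t : Bool,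
        ∃ X₂ : Fin p → Bool,
          S w X₁ X₂ f t ∧ (!f || y) = true ∧ (!z || t) = true) := by
  refine QTrue_congr fun w => ?_
  constructor
  · intro h X₁ y z
    obtain ⟨X₂, hX₂⟩ := h X₁
    exact ⟨false, true, X₂, hX₂, by simp, by simp⟩
  · intro h X₁
    obtain ⟨f, t, X₂, hS, hf, ht⟩ := h X₁ false true
    cases f <;> cases t <;> simp_all
end

section
/- Let S be any Boolean predicate of variables x_1,…,x_n and two additional Boolean arguments f,t, and let Q_1,…,Q_n ∈ {∃,∀}. Then the quantified statement Q_1x_1 ⋯ Q_nx_n S(x_1,…,x_n,0,1) is true if and only if ∃f ∃t ∀y Q_1x_1 ⋯ Q_nx_n [S(x_1,…,x_n,f,t) ∧ (¬f ∨ y) ∧ (¬y ∨ t)] is true. -/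
theorem QTrue.mono : ∀ (qs : List Bool) (P Q : List Bool → Prop),
    (∀ xs, P xs → Q xs) → QTrue qs P → QTrue qs Q
  | [], P, Q, h, hp => h [] hp
  | q :: qs, P, Q, h, hp => by
    cases q with
    | true => exact fun b => QTrue.mono qs _ _ (fun xs => h (b :: xs)) (hp b)
    | false =>
      obtain ⟨b, hb⟩ := hp
      exact ⟨b, QTrue.mono qs _ _ (fun xs => h (b :: xs)) hb⟩


theorem QTrue.not : ∀ (qs : List Bool) (P : List Bool → Prop),
    (∀ xs, ¬ P xs) → ¬ QTrue qs P
  | [], P, h, hp => h [] hp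
  | q :: qs, P, h, hp => by
    cases q with
    | true => exact QTrue.not qs _ (fun xs => h (false :: xs)) (hp false)
    | false =>
      obtain ⟨b, hb⟩ := hp
      exact QTrue.not qs _ (fun xs => h (b :: xs)) hb

/-- `Q₁x₁ ⋯ Qₙxₙ S(x₁,…,xₙ,0,1)` is true iff
`∃f ∃t ∀y Q₁x₁ ⋯ Qₙxₙ [S(x₁,…,xₙ,f,t) ∧ (f̄ ∨ y) ∧ (ȳ ∨ t)]` is true. -/
theorem prepend_exists_ft_forall_y (qs : List Bool)
    (S : List Bool → Bool → Bool → Prop) :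
    QTrue qs (fun xs => S xs false true) ↔
      ∃ f t : Bool, ∀ y : Bool,
        QTrue qs (fun xs =>
          S xs f t ∧ (!f || y) = true ∧ (!y || t) = true) := by
  constructor
  · intro h
    refine ⟨false, true, fun y => ?_⟩
    exact QTrue.mono qs _ _ (fun xs hs => ⟨hs, by simp, by simp⟩) h
  · rintro ⟨f, t, h⟩
    -- need something to extract f = false, t = true
    have hft : f = false ∧ t = true := by
      cases f with
      | true =>
        exfalso
        exact QTrue.not qs _ (by simp) (h false)
      | false =>
        cases t with
        | true => exact ⟨rfl, rfl⟩
        | false =>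
          exfalso
          exact QTrue.not qs _ (by simp) (h true)
    obtain ⟨hf, ht⟩ := hft
    subst hf; subst ht
    exact QTrue.mono qs _ _ (fun xs hs => hs.1) (h true)
end
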